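/- Let N ≥ 2, let Λ = diag(λ_0, λ_1, …, λ_{N−1}) with real entries, let α, β be real with α² + β² = 1 and p = (α, 0, …, 0, β)ᵀ, and suppose α² λ_{N−1} + β² λ_0 ≠ λ_1. Set ξ = (λ_1 − λ_0)(λ_1 − λ_{N−1}) / (α² λ_{N−1} + β² λ_0 − λ_1). Then λ_1 is a root of the quadratic x² − (λ_0 + λ_{N−1} − ξ)x + λ_0 λ_{N−1} − ξ(α² λ_{N−1} + β² λ_0) = 0, the other root equals λ_0 + λ_{N−1} − ξ − λ_1, and hence λ_1 is an eigenvalue of Θ = Λ − ξ p pᴴ. -/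

import Mathlib

open Matrix
open scoped ComplexOrder

theorem quadratic_eq_zero_of_eq_div {K : Type*} [Field K] {a b μ s ξ : K} (hs : s ≠ μ)
    (hξ : ξ = (μ - a) * (μ - b) / (s - μ)) :
    μ ^ 2 - (a + b - ξ) * μ + a * b - ξ * s = 0 := by
  have hξs : ξ * (s - μ) = (μ - a) * (μ - b) := by
    rw [hξ]
    exact div_mul_cancel₀ _ (sub_ne_zero.mpr hs)
  linear_combination -hξs

namespace Matrix

variable {K n : Type*} [Field K] [Fintype n] [DecidableEq n]

theorem mem_spectrum_of_mulVec_eq_smul {A : Matrix n n K} {μ : K} {v : n → K} (hv : v ≠ 0)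
    (hAv : A *ᵥ v = μ • v) : μ ∈ spectrum K A := by
  rw [← spectrum_toLin', ← Module.End.hasEigenvalue_iff_mem_spectrum]
  exact Module.End.hasEigenvalue_of_hasEigenvector
    ⟨Module.End.mem_eigenspace_iff.mpr (by simpa using hAv), hv⟩

theorem diagonal_sub_vecMulVec_mulVec_single {d u v : n → K} {i : n} (hv : v i = 0) :
    (diagonal d - vecMulVec u v) *ᵥ Pi.single i 1 = d i • Pi.single i 1 := by
  rw [sub_mulVec, diagonal_mulVec_single, vecMulVec_mulVec, dotProduct_single, hv]
  simp [← Pi.single_smul]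

theorem mem_spectrum_diagonal_sub_vecMulVec {d u v : n → K} {i : n} (hv : v i = 0) :
    d i ∈ spectrum K (diagonal d - vecMulVec u v) :=
  mem_spectrum_of_mulVec_eq_smul (Pi.single_ne_zero_iff.mpr one_ne_zero)
    (diagonal_sub_vecMulVec_mulVec_single hv)

end Matrix

/-- With `ξ = (λ₁ - λ₀)(λ₁ - λ_{N-1}) / (α² λ_{N-1} + β² λ₀ - λ₁)`, the value `λ₁` is a
root of the quadratic `x² - (λ₀ + λ_{N-1} - ξ) x + λ₀ λ_{N-1} - ξ(α² λ_{N-1} + β² λ₀) = 0`,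
the other root equals `λ₀ + λ_{N-1} - ξ - λ₁`, and `λ₁` is an eigenvalue of
`Θ = Λ - ξ p pᴴ`. -/
theorem sr1r_lambda1_is_eigenvalue {N : ℕ} (hN : 2 ≤ N)
    (lam : Fin N → ℝ) (α β : ℝ)
    (p : Fin N → ℂ)
    (hp : p = fun i : Fin N =>
      if (i : ℕ) = 0 then (α : ℂ) else if (i : ℕ) = N - 1 then (β : ℂ) else 0)
    (hne : α ^ 2 * lam ⟨N - 1, by omega⟩ + β ^ 2 * lam ⟨0, by omega⟩ ≠ lam ⟨1, by omega⟩)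
    (ξ : ℝ)
    (hξ : ξ = (lam ⟨1, by omega⟩ - lam ⟨0, by omega⟩) *
        (lam ⟨1, by omega⟩ - lam ⟨N - 1, by omega⟩) /
      (α ^ 2 * lam ⟨N - 1, by omega⟩ + β ^ 2 * lam ⟨0, by omega⟩ - lam ⟨1, by omega⟩))
    (Θ : Matrix (Fin N) (Fin N) ℂ)
    (hΘdef : Θ = Matrix.diagonal (fun i => (lam i : ℂ)) - (ξ : ℂ) • vecMulVec p (star p)) :
    (lam ⟨1, by omega⟩) ^ 2 -
        (lam ⟨0, by omega⟩ + lam ⟨N - 1, by omega⟩ - ξ) * lam ⟨1, by omega⟩ +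
        lam ⟨0, by omega⟩ * lam ⟨N - 1, by omega⟩ -
        ξ * (α ^ 2 * lam ⟨N - 1, by omega⟩ + β ^ 2 * lam ⟨0, by omega⟩) = 0 ∧
    ((lam ⟨0, by omega⟩ + lam ⟨N - 1, by omega⟩ - ξ - lam ⟨1, by omega⟩) ^ 2 -
        (lam ⟨0, by omega⟩ + lam ⟨N - 1, by omega⟩ - ξ) *
          (lam ⟨0, by omega⟩ + lam ⟨N - 1, by omega⟩ - ξ - lam ⟨1, by omega⟩) +
        lam ⟨0, by omega⟩ * lam ⟨N - 1, by omega⟩ -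
        ξ * (α ^ 2 * lam ⟨N - 1, by omega⟩ + β ^ 2 * lam ⟨0, by omega⟩) = 0) ∧
    ((lam ⟨1, by omega⟩ : ℂ) ∈ spectrum ℂ Θ) := by
  have hroot := quadratic_eq_zero_of_eq_div hne hξ
  refine ⟨hroot, by linear_combination hroot, ?_⟩
  -- `e₁` is an eigenvector: either `p₁ = 0`, or `N = 2`, where `λ₁ = λ_{N-1}` forces `ξ = 0`.
  have hξp : ((ξ : ℂ) • star p) ⟨1, by omega⟩ = 0 := by
    by_cases hN2 : N = 2
    · subst hN2
      simp [hξ]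
    · simp [hp, show 1 ≠ N - 1 by omega]
  rw [hΘdef, ← vecMulVec_smul]
  exact mem_spectrum_diagonal_sub_vecMulVec hξp
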